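/- arXiv:2112.09016 — 3 statements merged into one kernel-verified Lean document; each statement's English description precedes it below -/
import Mathlib

section
/- Let p ∈ (2,6) be a real number and ω > 0, and define φ : ℝ → ℝ by φ(x) := ((p/2)·ω·(1 − tanh(((p−2)/2)·√ω·x)²))^(1/(p−2)). Then φ(0)^(p−2) = p·ω/2, and E(φ,ℝ) = −((6−p)/(2(p+2)))·ω·∫_ℝ φ² dx; consequently ((p+2)/(6−p))·(−E(φ,ℝ)) = (1/p)·φ(0)^(p−2)·∫_ℝ φ² dx. -/
open MeasureTheory Real Filter
open Topology

/-- `u` belongs to `H¹(ℝ)` with derivative `u'`: `u ∈ L²(ℝ)`, `u' ∈ L²(ℝ)`,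
and `u` is absolutely continuous with derivative `u'`. -/
def InH1 (u u' : ℝ → ℝ) : Prop :=
  MemLp u 2 (volume : Measure ℝ) ∧ MemLp u' 2 (volume : Measure ℝ) ∧
  ∀ x : ℝ, u x = u 0 + ∫ t in (0:ℝ)..x, u' t

/-- The NLS energy `E(u,ℝ) = (1/2)∫|u'|² - (1/p)∫|u|^p`. -/
noncomputable def Energy (p : ℝ) (u u' : ℝ → ℝ) : ℝ :=
  (1/2) * (∫ x : ℝ, (u' x) ^ 2) - (1/p) * ∫ x : ℝ, |u x| ^ p

/-- The doubly nonlinear energy `F_{p,q}(u,ℝ) = E(u,ℝ) - (1/q)|u(0)|^q`. -/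
noncomputable def Fpq (p q : ℝ) (u u' : ℝ → ℝ) : ℝ :=
  Energy p u u' - (1/q) * |u 0| ^ q

/-- Ground-state energy level of `E` at mass `μ` on `ℝ`. -/
noncomputable def levelE (p μ : ℝ) : ℝ :=
  sInf {e : ℝ | ∃ u u' : ℝ → ℝ, InH1 u u' ∧ (∫ x : ℝ, (u x) ^ 2) = μ ∧ e = Energy p u u'}

/-- Ground-state energy level of `F_{p,q}` at mass `μ` on `ℝ`. -/
noncomputable def levelF (p q μ : ℝ) : ℝ :=
  sInf {e : ℝ | ∃ u u' : ℝ → ℝ, InH1 u u' ∧ (∫ x : ℝ, (u x) ^ 2) = μ ∧ e = Fpq p q u u'}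

/-- The soliton profile `φ(x) = ((p/2)·ω·(1 − tanh(((p−2)/2)·√ω·x)²))^(1/(p−2))`. -/
noncomputable def soliton (p ω : ℝ) : ℝ → ℝ := fun x =>
  ((p / 2) * ω * (1 - Real.tanh ((p - 2) / 2 * Real.sqrt ω * x) ^ 2)) ^ (1 / (p - 2))


lemma abs_sinh_le_cosh' (x : ℝ) : |Real.sinh x| ≤ Real.cosh x := by
  rw [abs_le]
  constructor
  · linarith [Real.cosh_add_sinh x, Real.exp_pos x]
  · linarith [Real.cosh_sub_sinh x, Real.exp_pos (-x)]

lemma half_exp_le_cosh' (x : ℝ) : Real.exp x / 2 ≤ Real.cosh x := by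
  rw [Real.cosh_eq]; nlinarith [Real.exp_pos (-x)]

lemma integrable_even_of_Ioi {f : ℝ → ℝ} (he : ∀ x, f (-x) = f x)
    (h : IntegrableOn f (Set.Ioi 0)) : Integrable f := by
  have int_Iic : IntegrableOn f (Set.Iic 0) := by
    have h_map_neg : (volume.restrict (Set.Ici (0:ℝ))).map Neg.neg
        = volume.restrict (Set.Iic 0) := by
      conv => rhs; rw [← Measure.map_neg_eq_self (volume : Measure ℝ),
        measurableEmbedding_neg.restrict_map]
      simp
    rw [IntegrableOn, ← h_map_neg, measurableEmbedding_neg.integrable_map_iff]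
    have hfc : f ∘ Neg.neg = f := funext fun y => he y
    rw [hfc]
    exact (integrableOn_Ici_iff_integrableOn_Ioi).mpr h
  have := int_Iic.union h
  rwa [Set.Iic_union_Ioi, integrableOn_univ] at this

lemma integrable_cosh_rpow {k s : ℝ} (hk : 0 < k) (hs : 0 < s) :
    Integrable (fun x : ℝ => Real.cosh (k * x) ^ (-s)) := by
  apply integrable_even_of_Ioi (fun x => by rw [mul_neg, Real.cosh_neg])
  have hg : IntegrableOn (fun x : ℝ => (2:ℝ)^s * Real.exp (-(s*k) * x)) (Set.Ioi 0) :=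
    (exp_neg_integrableOn_Ioi 0 (by positivity)).const_mul _
  refine Integrable.mono' hg ?_ ?_
  · exact ((Real.continuous_cosh.comp (continuous_const.mul continuous_id)).rpow_const
      (fun x => Or.inl (Real.cosh_pos _).ne')).aestronglyMeasurable
  · refine ae_of_all _ fun x => ?_
    have h1 : Real.exp (k*x) / 2 ≤ Real.cosh (k*x) := half_exp_le_cosh' _
    have h2 : Real.cosh (k*x) ^ (-s) ≤ (Real.exp (k*x)/2) ^ (-s) :=
      Real.rpow_le_rpow_of_nonpos (by positivity) h1 (by linarith)
    have h3 : (Real.exp (k*x)/2) ^ (-s) = (2:ℝ)^s * Real.exp (-(s*k)*x) := by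
      rw [Real.div_rpow (Real.exp_pos _).le (by norm_num), ← Real.exp_mul,
        Real.rpow_neg (by norm_num : (0:ℝ) ≤ 2), div_eq_mul_inv, inv_inv, mul_comm]
      congr 1
      ring
    rw [Real.norm_eq_abs, abs_of_nonneg (Real.rpow_nonneg (Real.cosh_pos _).le _)]
    rw [← h3]; exact h2


lemma cosh_tendsto_atTop' : Tendsto Real.cosh atTop atTop := by
  apply tendsto_atTop_mono (fun x => (by
    rw [Real.cosh_eq]; nlinarith [Real.exp_pos (-x)] : Real.exp x / 2 ≤ Real.cosh x))
  exact (Real.tendsto_exp_atTop).atTop_div_const (by norm_num)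

lemma cosh_tendsto_atBot' : Tendsto Real.cosh atBot atTop := by
  have h := cosh_tendsto_atTop'.comp tendsto_neg_atBot_atTop
  refine h.congr fun x => ?_
  simp [Real.cosh_neg]

lemma tendsto_G_atTop {k s : ℝ} (hk : 0 < k) (hs : 0 < s) :
    Tendsto (fun x : ℝ => Real.sinh (k*x) * Real.cosh (k*x) ^ (-(s+1))) atTop (𝓝 0) := by
  have hb : Tendsto (fun x : ℝ => Real.cosh (k*x) ^ (-s)) atTop (𝓝 0) := by
    apply (tendsto_rpow_neg_atTop hs).comp
    exact cosh_tendsto_atTop'.comp (tendsto_id.const_mul_atTop hk)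
  apply squeeze_zero_norm _ hb
  intro x
  have hc := Real.cosh_pos (k*x)
  rw [Real.norm_eq_abs, abs_mul, abs_of_nonneg (Real.rpow_nonneg hc.le _)]
  calc |Real.sinh (k*x)| * Real.cosh (k*x) ^ (-(s+1))
      ≤ Real.cosh (k*x) * Real.cosh (k*x) ^ (-(s+1)) := by
        apply mul_le_mul_of_nonneg_right (abs_sinh_le_cosh' _) (Real.rpow_nonneg hc.le _)
    _ = Real.cosh (k*x) ^ (-s) := by
        nth_rewrite 1 [← Real.rpow_one (Real.cosh (k*x))]
        rw [← Real.rpow_add hc]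
        norm_num

lemma tendsto_G_atBot {k s : ℝ} (hk : 0 < k) (hs : 0 < s) :
    Tendsto (fun x : ℝ => Real.sinh (k*x) * Real.cosh (k*x) ^ (-(s+1))) atBot (𝓝 0) := by
  have hb : Tendsto (fun x : ℝ => Real.cosh (k*x) ^ (-s)) atBot (𝓝 0) := by
    apply (tendsto_rpow_neg_atTop hs).comp
    exact cosh_tendsto_atBot'.comp (tendsto_id.const_mul_atBot hk)
  apply squeeze_zero_norm _ hb
  intro x
  have hc := Real.cosh_pos (k*x)
  rw [Real.norm_eq_abs, abs_mul, abs_of_nonneg (Real.rpow_nonneg hc.le _)]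
  calc |Real.sinh (k*x)| * Real.cosh (k*x) ^ (-(s+1))
      ≤ Real.cosh (k*x) * Real.cosh (k*x) ^ (-(s+1)) := by
        apply mul_le_mul_of_nonneg_right (abs_sinh_le_cosh' _) (Real.rpow_nonneg hc.le _)
    _ = Real.cosh (k*x) ^ (-s) := by
        nth_rewrite 1 [← Real.rpow_one (Real.cosh (k*x))]
        rw [← Real.rpow_add hc]
        norm_num


lemma hasDerivAt_G {k s : ℝ} (x : ℝ) :
    HasDerivAt (fun x : ℝ => Real.sinh (k*x) * Real.cosh (k*x) ^ (-(s+1)))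
      (k * ((s+1) * Real.cosh (k*x) ^ (-(s+2)) - s * Real.cosh (k*x) ^ (-s))) x := by
  have hkx : HasDerivAt (fun x : ℝ => k * x) k x := by
    simpa using (hasDerivAt_id x).const_mul k
  have h1 : HasDerivAt (fun x : ℝ => Real.sinh (k*x)) (Real.cosh (k*x) * k) x :=
    (Real.hasDerivAt_sinh (k*x)).comp x hkx
  have h2 : HasDerivAt (fun x : ℝ => Real.cosh (k*x)) (Real.sinh (k*x) * k) x :=
    (Real.hasDerivAt_cosh (k*x)).comp x hkx
  have hc := Real.cosh_pos (k*x)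
  have h3 := h2.rpow_const (p := -(s+1)) (Or.inl hc.ne')
  have h4 := h1.mul h3
  refine h4.congr_deriv ?_
  symm
  have e1 : Real.cosh (k*x) ^ (-(s+1)-1) = Real.cosh (k*x) ^ (-(s+2)) := by
    congr 1; ring
  have e2 : Real.cosh (k*x) * Real.cosh (k*x) ^ (-(s+1)) = Real.cosh (k*x) ^ (-s) := by
    nth_rewrite 1 [← Real.rpow_one (Real.cosh (k*x))]
    rw [← Real.rpow_add hc]; norm_num
  have e3 : Real.sinh (k*x) ^ 2 * Real.cosh (k*x) ^ (-(s+2))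
      = Real.cosh (k*x) ^ (-s) - Real.cosh (k*x) ^ (-(s+2)) := by
    rw [Real.sinh_sq, sub_mul, one_mul]
    congr 1
    rw [← Real.rpow_natCast (Real.cosh (k*x)) 2, ← Real.rpow_add hc]
    norm_num
  rw [e1] at h4 ⊢
  linear_combination (-k) * e2 + (k*(s+1)) * e3

lemma key_identity {k s : ℝ} (hk : 0 < k) (hs : 0 < s) :
    (s+1) * ∫ x : ℝ, Real.cosh (k*x) ^ (-(s+2)) = s * ∫ x : ℝ, Real.cosh (k*x) ^ (-s) := by
  set g : ℝ → ℝ := fun x => k * ((s+1) * Real.cosh (k*x) ^ (-(s+2)) - s * Real.cosh (k*x) ^ (-s))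
    with hg
  have hint2 : Integrable (fun x : ℝ => Real.cosh (k*x) ^ (-(s+2))) :=
    integrable_cosh_rpow hk (by linarith)
  have hint0 : Integrable (fun x : ℝ => Real.cosh (k*x) ^ (-s)) := integrable_cosh_rpow hk hs
  have hgint : Integrable g := (((hint2.const_mul _).sub (hint0.const_mul _)).const_mul _)
  have hIoi : ∫ x in Set.Ioi (0:ℝ), g x = 0 := by
    rw [integral_Ioi_of_hasDerivAt_of_tendsto' (fun x _ => hasDerivAt_G x)
      hgint.integrableOn (tendsto_G_atTop hk hs)]
    simp [Real.sinh_zero]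
  have hIic : ∫ x in Set.Iic (0:ℝ), g x = 0 := by
    rw [integral_Iic_of_hasDerivAt_of_tendsto' (fun x _ => hasDerivAt_G x)
      hgint.integrableOn (tendsto_G_atBot hk hs)]
    simp [Real.sinh_zero]
  have htot : ∫ x : ℝ, g x = 0 := by
    rw [← intervalIntegral.integral_Iic_add_Ioi hgint.integrableOn hgint.integrableOn, hIoi, hIic, add_zero]
  rw [hg] at htot
  simp only [integral_const_mul] at htot
  rw [integral_sub (hint2.const_mul _) (hint0.const_mul _), integral_const_mul,
    integral_const_mul] at htot
  have := mul_eq_zero.mp htot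
  rcases this with h | h
  · exact absurd h hk.ne'
  · linarith [h]

theorem soliton_energy_identities (p ω : ℝ) (hp2 : 2 < p) (hp6 : p < 6) (hω : 0 < ω) :
    soliton p ω 0 ^ (p - 2) = p * ω / 2 ∧
    Energy p (soliton p ω) (deriv (soliton p ω)) =
      -((6 - p) / (2 * (p + 2))) * ω * ∫ x : ℝ, (soliton p ω x) ^ 2 ∧
    ((p + 2) / (6 - p)) * (-Energy p (soliton p ω) (deriv (soliton p ω))) =
      (1 / p) * soliton p ω 0 ^ (p - 2) * ∫ x : ℝ, (soliton p ω x) ^ 2 := by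
  have hpm : (0:ℝ) < p - 2 := by linarith
  have hpm' : p - 2 ≠ 0 := hpm.ne'
  have hp0 : (0:ℝ) < p := by linarith
  set a : ℝ := (p/2)*ω with ha_def
  have ha : (0:ℝ) < a := by positivity
  set β : ℝ := 1/(p-2) with hβ_def
  have hβ : 0 < β := by positivity
  set k : ℝ := (p-2)/2 * Real.sqrt ω with hk_def
  have hk : 0 < k := by
    have := Real.sqrt_pos.mpr hω
    positivity
  set C : ℝ := a ^ β with hC_def
  have hC : 0 < C := Real.rpow_pos_of_pos ha _
  -- soliton rewrite
  have hsol : soliton p ω = fun x => C * Real.cosh (k*x) ^ (-(2*β)) := by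
    funext x
    have hc := Real.cosh_pos (k*x)
    have h1 : 1 - Real.tanh (k*x) ^ 2 = (Real.cosh (k*x) ^ 2)⁻¹ := by
      rw [Real.tanh_eq_sinh_div_cosh, div_pow]
      field_simp
      exact Real.cosh_sq_sub_sinh_sq _
    show (a*(1 - Real.tanh (k*x) ^2))^β = _
    rw [h1, Real.mul_rpow ha.le (by positivity)]
    congr 1
    rw [← Real.rpow_natCast (Real.cosh (k*x)) 2, ← Real.rpow_neg hc.le,
      ← Real.rpow_mul hc.le]
    norm_num
  -- derivative
  have hD : ∀ x : ℝ, HasDerivAt (soliton p ω)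
      (C * (Real.sinh (k*x) * k * (-(2*β)) * Real.cosh (k*x) ^ (-(2*β)-1))) x := by
    intro x
    rw [hsol]
    have hkx : HasDerivAt (fun x : ℝ => k * x) k x := by
      simpa using (hasDerivAt_id x).const_mul k
    have h2 : HasDerivAt (fun x : ℝ => Real.cosh (k*x)) (Real.sinh (k*x) * k) x :=
      (Real.hasDerivAt_cosh (k*x)).comp x hkx
    exact (h2.rpow_const (Or.inl (Real.cosh_pos (k*x)).ne')).const_mul C
  -- pointwise formulas
  have h_sq : ∀ x : ℝ, (soliton p ω x) ^ 2 = C^2 * Real.cosh (k*x) ^ (-(4*β)) := by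
    intro x
    have hc := Real.cosh_pos (k*x)
    rw [hsol]
    simp only
    rw [mul_pow, ← Real.rpow_natCast (Real.cosh (k*x) ^ (-(2*β))) 2,
      ← Real.rpow_mul hc.le,
      show (-(2*β))*((2:ℕ):ℝ) = -(4*β) by push_cast; ring]
  have hCp : C ^ p = a * C^2 := by
    rw [hC_def, ← Real.rpow_natCast (a ^ β) 2, ← Real.rpow_mul ha.le, ← Real.rpow_mul ha.le]
    nth_rewrite 2 [← Real.rpow_one a]
    rw [← Real.rpow_add ha]
    congr 1
    rw [hβ_def]
    push_cast
    field_simp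
    ring
  have h_p : ∀ x : ℝ, |soliton p ω x| ^ p = a * C^2 * Real.cosh (k*x) ^ (-(4*β+2)) := by
    intro x
    have hc := Real.cosh_pos (k*x)
    rw [hsol]
    rw [abs_of_nonneg (by positivity), Real.mul_rpow hC.le (by positivity),
      ← Real.rpow_mul hc.le, hCp,
      show -(2*β)*p = -(4*β+2) by rw [hβ_def]; field_simp; ring]
  have h_d : ∀ x : ℝ, (deriv (soliton p ω) x) ^ 2 =
      ω * C^2 * (Real.cosh (k*x) ^ (-(4*β)) - Real.cosh (k*x) ^ (-(4*β+2))) := by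
    intro x
    have hc := Real.cosh_pos (k*x)
    rw [(hD x).deriv]
    have e1 : (Real.cosh (k*x) ^ (-(2*β)-1)) ^ (2:ℕ) = Real.cosh (k*x) ^ (-(4*β+2)) := by
      rw [← Real.rpow_natCast (Real.cosh (k*x) ^ (-(2*β)-1)) 2, ← Real.rpow_mul hc.le]
      congr 1
      push_cast; ring
    have e2 : Real.sinh (k*x) ^ 2 = Real.cosh (k*x) ^ 2 - 1 := Real.sinh_sq _
    have e3 : Real.cosh (k*x) ^ (2:ℕ) * Real.cosh (k*x) ^ (-(4*β+2)) =
        Real.cosh (k*x) ^ (-(4*β)) := by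
      rw [← Real.rpow_natCast (Real.cosh (k*x)) 2, ← Real.rpow_add hc]
      congr 1
      push_cast; ring
    have e4 : k^2 = (p-2)^2/4 * ω := by
      rw [hk_def, mul_pow, div_pow, Real.sq_sqrt hω.le]; norm_num
    have e5 : β^2 = 1/(p-2)^2 := by rw [hβ_def]; field_simp
    calc (C * (Real.sinh (k*x) * k * (-(2*β)) * Real.cosh (k*x) ^ (-(2*β)-1))) ^ 2
        = (4*(β^2)*(k^2)) * C^2 * (Real.sinh (k*x)^2 *
            (Real.cosh (k*x) ^ (-(2*β)-1)) ^ (2:ℕ)) := by ring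
      _ = ω * C^2 * (Real.cosh (k*x) ^ (-(4*β)) - Real.cosh (k*x) ^ (-(4*β+2))) := by
          rw [e1, e2, e4, e5]
          rw [sub_mul, one_mul, e3]
          field_simp
  -- integrals
  have hAint : Integrable (fun x : ℝ => Real.cosh (k*x) ^ (-(4*β))) :=
    integrable_cosh_rpow hk (by positivity)
  have hBint : Integrable (fun x : ℝ => Real.cosh (k*x) ^ (-(4*β+2))) :=
    integrable_cosh_rpow hk (by positivity)
  have key := key_identity hk (show 0 < 4*β by positivity)
  have I1 : (∫ x : ℝ, (soliton p ω x)^2)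
      = C^2 * ∫ x : ℝ, Real.cosh (k*x) ^ (-(4*β)) := by
    simp_rw [h_sq]; exact integral_const_mul _ _
  have I2 : (∫ x : ℝ, |soliton p ω x| ^ p)
      = (a * C^2) * ∫ x : ℝ, Real.cosh (k*x) ^ (-(4*β+2)) := by
    simp_rw [h_p]; exact integral_const_mul _ _
  have I3 : (∫ x : ℝ, (deriv (soliton p ω) x)^2)
      = ω * C^2 * ((∫ x : ℝ, Real.cosh (k*x) ^ (-(4*β)))
          - ∫ x : ℝ, Real.cosh (k*x) ^ (-(4*β+2))) := by
    simp_rw [h_d]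
    rw [integral_const_mul, integral_sub hAint hBint]
  set A : ℝ := ∫ x : ℝ, Real.cosh (k*x) ^ (-(4*β)) with hA_def
  set B : ℝ := ∫ x : ℝ, Real.cosh (k*x) ^ (-(4*β+2)) with hB_def
  have hkey : (p+2) * B = 4 * A := by
    have h2 : (p-2) * ((4*β+1) * B) = (p-2) * (4*β * A) := by rw [key]
    rw [hβ_def] at h2
    field_simp at h2
    linarith
  have hB : B = 4*A/(p+2) := by
    field_simp
    linarith [hkey]
  have g1 : soliton p ω 0 ^ (p-2) = p * ω / 2 := by
    have h0 : soliton p ω 0 = C := by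
      rw [hsol]
      simp [Real.cosh_zero, Real.one_rpow]
    rw [h0, hC_def, ← Real.rpow_mul ha.le,
      show β*(p-2) = 1 by rw [hβ_def]; field_simp, Real.rpow_one, ha_def]
    ring
  have g2 : Energy p (soliton p ω) (deriv (soliton p ω)) =
      -((6 - p) / (2 * (p + 2))) * ω * ∫ x : ℝ, (soliton p ω x) ^ 2 := by
    simp only [Energy]
    rw [I3, I2, I1, hB, ha_def]
    field_simp
    ring
  refine ⟨g1, g2, ?_⟩
  rw [g2, g1, I1]
  have h6p : (6:ℝ) - p ≠ 0 := by linarith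
  field_simp
end

section
/- Fix a real exponent p ∈ (2,6). Then for every μ > 0 the ground state energy level inf{E(u,ℝ) : u ∈ H¹_μ(ℝ)} is finite and strictly negative: −∞ < inf{E(u,ℝ) : u ∈ H¹_μ(ℝ)} < 0. -/
open MeasureTheory Real Filter

private lemma exists_small (b C q r : ℝ) (hb : 0 < b) (hC : 0 < C) (hq : 0 ≤ q) (hlt : q < r) :
    ∃ s : ℝ, 0 < s ∧ b * s ^ r < C * s ^ q := by
  have hrq : 0 < r - q := by linarith
  set s : ℝ := min 1 ((C / (2 * b)) ^ (1 / (r - q))) with hs_def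
  have hpos : 0 < (C / (2 * b)) ^ (1 / (r - q)) := rpow_pos_of_pos (by positivity) _
  have hs : 0 < s := lt_min one_pos hpos
  refine ⟨s, hs, ?_⟩
  have h1 : s ^ (r - q) ≤ C / (2 * b) := by
    calc s ^ (r - q) ≤ ((C / (2 * b)) ^ (1 / (r - q))) ^ (r - q) :=
          rpow_le_rpow hs.le (min_le_right _ _) hrq.le
      _ = C / (2 * b) := by
          rw [← rpow_mul (by positivity : (0:ℝ) ≤ C / (2 * b)),
            one_div, inv_mul_cancel₀ hrq.ne', rpow_one]
  have h1' : s ^ (r - q) * (2 * b) ≤ C := (le_div_iff₀ (by positivity)).mp h1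
  have hsq : 0 < s ^ q := rpow_pos_of_pos hs q
  have e : s ^ r = s ^ (r - q) * s ^ q := by
    rw [← rpow_add hs]; congr 1; ring
  nlinarith [mul_le_mul_of_nonneg_right h1' hsq.le, mul_pos hC hsq]

private lemma young_bound (c t : ℝ) (hc : 0 < c) (ht0 : 0 < t) (ht1 : t < 1) :
    ∀ A : ℝ, 0 ≤ A → -(c * ((2 * c) ^ (1 / (1 - t))) ^ t) ≤ A / 2 - c * A ^ t := by
  intro A hA
  set R : ℝ := (2 * c) ^ (1 / (1 - t)) with hR_def
  have hR : 0 < R := rpow_pos_of_pos (by positivity) _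
  have h1t : (1:ℝ) - t ≠ 0 := by intro h; linarith [sub_eq_zero.mp h]
  have hkey : c * R ^ (t - 1) = 1 / 2 := by
    rw [hR_def, ← rpow_mul (by positivity : (0:ℝ) ≤ 2 * c)]
    rw [show 1 / (1 - t) * (t - 1) = -1 by field_simp; ring, rpow_neg_one]
    field_simp
  rcases le_total A R with h | h
  · have h1 : c * A ^ t ≤ c * R ^ t :=
      mul_le_mul_of_nonneg_left (rpow_le_rpow hA h ht0.le) hc.le
    nlinarith [rpow_nonneg hA t]
  · have hA0 : 0 < A := lt_of_lt_of_le hR h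
    have h1 : A ^ (t - 1) ≤ R ^ (t - 1) := rpow_le_rpow_of_nonpos hR h (by linarith)
    have h2 : c * A ^ t ≤ A / 2 := by
      have e : A ^ t = A ^ (t - 1) * A := by
        rw [← rpow_add_one hA0.ne']; congr 1; ring
      calc c * A ^ t = c * A ^ (t - 1) * A := by rw [e]; ring
        _ ≤ c * R ^ (t - 1) * A := by nlinarith [mul_le_mul_of_nonneg_left h1 hc.le]
        _ = A / 2 := by rw [hkey]; ring
    have h3 : 0 ≤ c * R ^ t := by positivity
    linarith


private lemma le_sqrt_of_amgm (X d A : ℝ) (hX : 0 ≤ X) (hA : 0 ≤ A) (hd : 0 ≤ d)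
    (h : ∀ ε : ℝ, 0 < ε → 2 * X ≤ ε * A + d / ε) : X ≤ Real.sqrt (d * A) := by
  rcases eq_or_lt_of_le hA with hA0 | hApos
  · have hX0 : X ≤ 0 := by
      by_contra h'
      push_neg at h'
      have hε : 0 < d / (2 * X) + 1 := by positivity
      have h2 := h _ hε
      rw [← hA0, mul_zero, zero_add] at h2
      have h3 : d / (d / (2 * X) + 1) < 2 * X := by
        rw [div_lt_iff₀ hε]
        have e : 2 * X * (d / (2 * X) + 1) = d + 2 * X := by field_simp
        rw [e]; linarith
      linarith
    exact le_trans hX0 (Real.sqrt_nonneg _)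
  · rcases eq_or_lt_of_le hd with hd0 | hdpos
    · have hX0 : X ≤ 0 := by
        by_contra h'
        push_neg at h'
        have h2 := h (X / A) (by positivity)
        rw [← hd0, zero_div, add_zero, div_mul_cancel₀ X hApos.ne'] at h2
        linarith
      exact le_trans hX0 (Real.sqrt_nonneg _)
    · have hsA : 0 < Real.sqrt A := Real.sqrt_pos.2 hApos
      have hsd : 0 < Real.sqrt d := Real.sqrt_pos.2 hdpos
      have hε : 0 < Real.sqrt d / Real.sqrt A := by positivity
      have h2 := h _ hε
      have e1 : Real.sqrt d / Real.sqrt A * A = Real.sqrt d * Real.sqrt A := by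
        rw [div_mul_eq_mul_div, mul_div_assoc, Real.div_sqrt]
      have e2 : d / (Real.sqrt d / Real.sqrt A) = Real.sqrt d * Real.sqrt A := by
        rw [div_div_eq_mul_div, mul_comm d (Real.sqrt A), mul_div_assoc, Real.div_sqrt,
          mul_comm]
      rw [e1, e2] at h2
      rw [Real.sqrt_mul hd]
      linarith

private lemma interval_holder (f : ℝ → ℝ) (hf2 : Integrable (fun x => f x ^ 2) volume)
    (hfm : AEStronglyMeasurable f volume) (a b : ℝ) (hab : a ≤ b) :
    |∫ t in a..b, f t| ≤ Real.sqrt ((b - a) * ∫ x : ℝ, f x ^ 2) := by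
  set A : ℝ := ∫ x : ℝ, f x ^ 2 with hA_def
  have hA : 0 ≤ A := integral_nonneg fun x => sq_nonneg _
  have hconst : ∀ c : ℝ, IntegrableOn (fun _ : ℝ => c) (Set.Ioc a b) volume := by
    intro c
    exact integrableOn_const measure_Ioc_lt_top.ne
  have hIoc : IntegrableOn f (Set.Ioc a b) volume := by
    refine Integrable.mono' (((hf2.integrableOn).add (hconst 1)).div_const 2)
      (hfm.restrict) (ae_of_all _ fun t => ?_)
    rw [Real.norm_eq_abs]
    show |f t| ≤ (f t ^ 2 + 1) / 2
    nlinarith [sq_nonneg (|f t| - 1), sq_abs (f t), abs_nonneg (f t)]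
  have habs : IntegrableOn (fun t => |f t|) (Set.Ioc a b) volume := hIoc.abs
  set X : ℝ := ∫ t in Set.Ioc a b, |f t| with hX_def
  have hX : 0 ≤ X := setIntegral_nonneg measurableSet_Ioc fun t _ => abs_nonneg _
  have hI2le : (∫ t in Set.Ioc a b, f t ^ 2) ≤ A :=
    setIntegral_le_integral hf2 (ae_of_all _ fun t => sq_nonneg _)
  have hI2 : 0 ≤ ∫ t in Set.Ioc a b, f t ^ 2 :=
    setIntegral_nonneg measurableSet_Ioc fun t _ => sq_nonneg _
  have key : ∀ ε : ℝ, 0 < ε → 2 * X ≤ ε * A + (b - a) / ε := by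
    intro ε hε
    have hpt : ∀ t ∈ Set.Ioc a b, |f t| ≤ (ε * f t ^ 2 + 1 / ε) / 2 := by
      intro t _
      have h2' : 2 * ε * |f t| ≤ ε ^ 2 * f t ^ 2 + 1 := by
        nlinarith [sq_nonneg (ε * |f t| - 1), sq_abs (f t)]
      have key2 : (ε * f t ^ 2 + 1 / ε) / 2 - |f t|
          = (ε ^ 2 * f t ^ 2 + 1 - 2 * ε * |f t|) / (2 * ε) := by
        field_simp
      have h3 : 0 ≤ (ε ^ 2 * f t ^ 2 + 1 - 2 * ε * |f t|) / (2 * ε) :=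
        div_nonneg (by linarith) (by positivity)
      linarith
    have hg : IntegrableOn (fun t => (ε * f t ^ 2 + 1 / ε) / 2) (Set.Ioc a b) volume :=
      (((hf2.integrableOn).const_mul ε).add (hconst (1 / ε))).div_const 2
    have h2 : X ≤ ∫ t in Set.Ioc a b, (ε * f t ^ 2 + 1 / ε) / 2 :=
      setIntegral_mono_on habs hg measurableSet_Ioc hpt
    have h3 : (∫ t in Set.Ioc a b, (ε * f t ^ 2 + 1 / ε) / 2)
        = (ε * (∫ t in Set.Ioc a b, f t ^ 2) + (b - a) * (1 / ε)) / 2 := by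
      rw [integral_div, integral_add ((hf2.integrableOn).const_mul ε) (hconst (1 / ε)),
        integral_const_mul, setIntegral_const, Measure.real, Real.volume_Ioc, smul_eq_mul,
        ENNReal.toReal_ofReal (by linarith)]
    rw [h3] at h2
    have h4 : ε * (∫ t in Set.Ioc a b, f t ^ 2) ≤ ε * A :=
      mul_le_mul_of_nonneg_left hI2le hε.le
    have h5 : (b - a) * (1 / ε) = (b - a) / ε := by ring
    linarith
  have hXle : X ≤ Real.sqrt ((b - a) * A) :=
    le_sqrt_of_amgm X (b - a) A hX hA (by linarith) key
  calc |∫ t in a..b, f t| ≤ ∫ t in a..b, |f t| :=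
        intervalIntegral.abs_integral_le_integral_abs hab
    _ = X := by rw [intervalIntegral.integral_of_le hab, hX_def]
    _ ≤ Real.sqrt ((b - a) * A) := hXle

private lemma energy_lower (p μ : ℝ) (hp2 : 2 < p) (hp6 : p < 6) (hμ : 0 < μ) :
    ∃ L : ℝ, ∀ u u' : ℝ → ℝ, InH1 u u' → (∫ x : ℝ, (u x) ^ 2) = μ →
      L ≤ Energy p u u' := by
  have hp0 : 0 < p := by linarith
  set t : ℝ := (p - 2) / 4 with ht_def
  have ht0 : 0 < t := by rw [ht_def]; linarith
  have ht1 : t < 1 := by rw [ht_def]; linarith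
  set c : ℝ := (1 / p) * (4:ℝ) ^ (2 * t) * μ ^ t * μ with hc_def
  have hc : 0 < c := by
    have h4 : (0:ℝ) < (4:ℝ) ^ (2 * t) := rpow_pos_of_pos (by norm_num) _
    have hμt : (0:ℝ) < μ ^ t := rpow_pos_of_pos hμ _
    positivity
  refine ⟨-(c * ((2 * c) ^ (1 / (1 - t))) ^ t), ?_⟩
  rintro u u' ⟨hu1, hu2, hftc⟩ hmass
  set A : ℝ := ∫ x : ℝ, u' x ^ 2 with hA_def
  have hA0 : 0 ≤ A := integral_nonneg fun x => sq_nonneg _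
  have hu_sq : Integrable (fun x => u x ^ 2) volume :=
    (memLp_two_iff_integrable_sq hu1.aestronglyMeasurable).1 hu1
  have hu'_sq : Integrable (fun x => u' x ^ 2) volume :=
    (memLp_two_iff_integrable_sq hu2.aestronglyMeasurable).1 hu2
  have hu'loc : LocallyIntegrable u' volume := hu2.locallyIntegrable one_le_two
  have hint : ∀ a b : ℝ, IntervalIntegrable u' volume a b := fun a b =>
    intervalIntegrable_iff.2
      ((hu'loc.integrableOn_isCompact isCompact_uIcc).mono_set Set.uIoc_subset_uIcc)
  have hcont : Continuous u :=
    (continuous_const.add (intervalIntegral.continuous_primitive hint 0)).congr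
      fun x => (hftc x).symm
  -- A is positive
  have hApos : 0 < A := by
    rcases hA0.lt_or_eq with h | h
    · exact h
    · exfalso
      have hz : (fun x => u' x ^ 2) =ᵐ[volume] 0 :=
        (integral_eq_zero_iff_of_nonneg (fun x => sq_nonneg _) hu'_sq).1 h.symm
      have hz' : u' =ᵐ[volume] 0 := by
        filter_upwards [hz] with x hx
        have : u' x ^ 2 = 0 := hx
        exact (pow_eq_zero_iff two_ne_zero).mp this
      have hconst : ∀ x : ℝ, u x = u 0 := by
        intro x
        have : (∫ s in (0:ℝ)..x, u' s) = ∫ s in (0:ℝ)..x, (0:ℝ) := by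
          apply intervalIntegral.integral_congr_ae
          filter_upwards [hz'] with s hs _
          exact hs
        rw [hftc x, this]
        simp
      have hfun : (fun x : ℝ => u x ^ 2) = fun _ => u 0 ^ 2 := by
        funext x; rw [hconst x]
      rw [hfun] at hu_sq
      have h0 : u 0 ^ 2 = 0 := by
        rcases integrable_const_iff.1 hu_sq with h' | h'
        · exact h'
        · exact absurd h'.measure_univ_lt_top (by simp [Real.volume_univ])
      have : (∫ x : ℝ, u x ^ 2) = 0 := by rw [hfun, h0]; simp
      rw [hmass] at this
      linarith
  -- sup bound
  have hsup : ∀ x0 : ℝ, u x0 ^ 2 ≤ 4 * Real.sqrt (A * μ) := by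
    intro x0
    rcases eq_or_ne (u x0) 0 with h0 | h0
    · have h' : (0:ℝ) ≤ 4 * Real.sqrt (A * μ) := by positivity
      simpa [h0] using h'
    · set s : ℝ := |u x0| with hs_def
      have hs : 0 < s := abs_pos.2 h0
      set δ : ℝ := s ^ 2 / (4 * A) with hδ_def
      have hδ : 0 < δ := by positivity
      have hstep : ∀ x ∈ Set.Ioc x0 (x0 + δ), (s / 2) ^ 2 ≤ u x ^ 2 := by
        intro x hx
        have hx1 : x0 ≤ x := hx.1.le
        have hx2 : x ≤ x0 + δ := hx.2
        have hI : |∫ τ in x0..x, u' τ| ≤ Real.sqrt ((x - x0) * A) :=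
          interval_holder u' hu'_sq hu2.aestronglyMeasurable x0 x hx1
        have hI2 : Real.sqrt ((x - x0) * A) ≤ Real.sqrt (δ * A) :=
          Real.sqrt_le_sqrt (mul_le_mul_of_nonneg_right (by linarith) hA0)
        have hδA : δ * A = (s / 2) ^ 2 := by
          rw [hδ_def]; field_simp; ring
        have hI3 : Real.sqrt (δ * A) = s / 2 := by
          rw [hδA, Real.sqrt_sq (by positivity)]
        have hux : u x = u x0 + ∫ τ in x0..x, u' τ := by
          rw [hftc x, hftc x0]
          have := intervalIntegral.integral_interval_sub_left (hint 0 x) (hint 0 x0)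
          rw [← this]
          ring
        have habs : s / 2 ≤ |u x| := by
          have h1 : |u x0| - |u x| ≤ |u x0 - u x| := abs_sub_abs_le_abs_sub _ _
          have h2 : |u x0 - u x| = |∫ τ in x0..x, u' τ| := by
            rw [hux]; rw [show u x0 - (u x0 + ∫ τ in x0..x, u' τ) = -(∫ τ in x0..x, u' τ) by ring,
              abs_neg]
          rw [h2] at h1
          have h3 : |∫ τ in x0..x, u' τ| ≤ s / 2 := by
            calc |∫ τ in x0..x, u' τ| ≤ Real.sqrt ((x - x0) * A) := hI
              _ ≤ Real.sqrt (δ * A) := hI2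
              _ = s / 2 := hI3
          rw [← hs_def] at h1
          linarith
        calc (s / 2) ^ 2 ≤ |u x| ^ 2 := pow_le_pow_left₀ (by positivity) habs 2
          _ = u x ^ 2 := sq_abs _
      have hlow : δ * (s / 2) ^ 2 ≤ μ := by
        have h1 : (∫ x in Set.Ioc x0 (x0 + δ), (s / 2) ^ 2) ≤
            ∫ x in Set.Ioc x0 (x0 + δ), u x ^ 2 :=
          setIntegral_mono_on (integrableOn_const measure_Ioc_lt_top.ne)
            hu_sq.integrableOn measurableSet_Ioc hstep
        have h2 : (∫ _x in Set.Ioc x0 (x0 + δ), (s / 2) ^ 2) = δ * (s / 2) ^ 2 := by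
          rw [setIntegral_const, Measure.real, Real.volume_Ioc, smul_eq_mul,
            show x0 + δ - x0 = δ by ring, ENNReal.toReal_ofReal hδ.le]
        have h3 : (∫ x in Set.Ioc x0 (x0 + δ), u x ^ 2) ≤ ∫ x : ℝ, u x ^ 2 :=
          setIntegral_le_integral hu_sq (ae_of_all _ fun x => sq_nonneg _)
        rw [hmass] at h3
        linarith [h2 ▸ h1]
      -- δ * (s/2)^2 = s^4/(16 A)
      have hs4 : s ^ 2 * s ^ 2 ≤ 16 * (A * μ) := by
        have e : δ * (s / 2) ^ 2 = s ^ 2 * s ^ 2 / (16 * A) := by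
          rw [hδ_def]; field_simp; ring
        rw [e] at hlow
        rw [div_le_iff₀ (by positivity)] at hlow
        nlinarith
      have e2 : u x0 ^ 2 = s ^ 2 := (sq_abs _).symm
      rw [e2]
      have : s ^ 2 = Real.sqrt (s ^ 2 * s ^ 2) := by
        rw [show s ^ 2 * s ^ 2 = (s ^ 2) ^ 2 by ring, Real.sqrt_sq (sq_nonneg _)]
      rw [this]
      calc Real.sqrt (s ^ 2 * s ^ 2) ≤ Real.sqrt (16 * (A * μ)) := Real.sqrt_le_sqrt hs4
        _ = 4 * Real.sqrt (A * μ) := by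
          rw [show (16:ℝ) * (A * μ) = 4 ^ 2 * (A * μ) by norm_num, Real.sqrt_mul (by positivity),
            Real.sqrt_sq (by norm_num)]
  -- potential bound
  set S : ℝ := 4 * Real.sqrt (A * μ) with hS_def
  have hS0 : 0 ≤ S := by positivity
  set K : ℝ := Real.sqrt S ^ (p - 2) with hK_def
  have hK0 : 0 ≤ K := rpow_nonneg (Real.sqrt_nonneg _) _
  have hpt : ∀ x : ℝ, |u x| ^ p ≤ K * u x ^ 2 := by
    intro x
    rcases eq_or_ne (u x) 0 with h0 | h0
    · rw [h0]
      simp [Real.zero_rpow (show p ≠ 0 by linarith)]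
    · have habs : 0 < |u x| := abs_pos.2 h0
      have hle : |u x| ≤ Real.sqrt S := by
        calc |u x| = Real.sqrt (u x ^ 2) := by rw [Real.sqrt_sq_eq_abs]
          _ ≤ Real.sqrt S := Real.sqrt_le_sqrt (hsup x)
      calc |u x| ^ p = |u x| ^ (p - 2) * |u x| ^ (2:ℝ) := by
            rw [← Real.rpow_add habs]; congr 1; ring
        _ = |u x| ^ (p - 2) * u x ^ 2 := by
            rw [show ((2:ℝ)) = ((2:ℕ):ℝ) by norm_num, Real.rpow_natCast, sq_abs]
        _ ≤ K * u x ^ 2 :=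
            mul_le_mul_of_nonneg_right
              (rpow_le_rpow (abs_nonneg _) hle (by linarith)) (sq_nonneg _)
  have hmeas : AEStronglyMeasurable (fun x => |u x| ^ p) volume :=
    (hcont.abs.rpow_const fun x => Or.inr (by linarith : (0:ℝ) ≤ p)).aestronglyMeasurable
  have hpint : Integrable (fun x => |u x| ^ p) volume := by
    refine (hu_sq.const_mul K).mono' hmeas (ae_of_all _ fun x => ?_)
    rw [Real.norm_eq_abs, abs_of_nonneg (rpow_nonneg (abs_nonneg _) _)]
    exact hpt x
  have hIle : (∫ x : ℝ, |u x| ^ p) ≤ K * μ := by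
    calc (∫ x : ℝ, |u x| ^ p) ≤ ∫ x : ℝ, K * u x ^ 2 :=
          integral_mono hpint (hu_sq.const_mul K) hpt
      _ = K * ∫ x : ℝ, u x ^ 2 := integral_const_mul K _
      _ = K * μ := by rw [hmass]
  -- algebra: (1/p) * (K * μ) = c * A ^ t
  have halg : (1 / p) * (K * μ) = c * A ^ t := by
    have e1 : K = S ^ (2 * t) := by
      rw [hK_def, Real.sqrt_eq_rpow, ← Real.rpow_mul hS0]
      congr 1
      rw [ht_def]; ring
    have e2 : S ^ (2 * t) = (4:ℝ) ^ (2 * t) * (A ^ t * μ ^ t) := by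
      rw [hS_def, Real.mul_rpow (by norm_num) (Real.sqrt_nonneg _),
        Real.sqrt_eq_rpow, ← Real.rpow_mul (by positivity),
        show 1 / 2 * (2 * t) = t by ring, Real.mul_rpow hA0 hμ.le]
    rw [e1, e2, hc_def]
    ring
  have hbound : (1 / p) * (∫ x : ℝ, |u x| ^ p) ≤ c * A ^ t := by
    rw [← halg]
    have : 0 ≤ 1 / p := by positivity
    exact mul_le_mul_of_nonneg_left hIle this
  have hyoung := young_bound c t hc ht0 ht1 A hA0
  have : Energy p u u' = (1/2) * A - (1/p) * ∫ x : ℝ, |u x| ^ p := by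
    rw [Energy, hA_def]
  rw [this]
  have : A / 2 - c * A ^ t ≤ (1/2) * A - (1/p) * ∫ x : ℝ, |u x| ^ p := by
    linarith
  linarith

set_option maxHeartbeats 1000000 in
private lemma gaussian_neg (p μ : ℝ) (hp2 : 2 < p) (hp6 : p < 6) (hμ : 0 < μ) :
    ∃ u u' : ℝ → ℝ, InH1 u u' ∧ (∫ x : ℝ, (u x) ^ 2) = μ ∧ Energy p u u' < 0 := by
  have hp0 : 0 < p := by linarith
  have hπ : (0:ℝ) < π := Real.pi_pos
  set β : ℝ := μ / Real.sqrt (π / 2) with hβ_def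
  have hβ : 0 < β := by positivity
  have hβp : (0:ℝ) < β ^ (p / 2) := rpow_pos_of_pos hβ _
  set C : ℝ := (1 / p) * β ^ (p / 2) * Real.sqrt (π / p) with hC_def
  have hC : 0 < C := by positivity
  obtain ⟨s, hs, hlt⟩ := exists_small (2 * Real.sqrt π * β) C (p / 2 - 1) 2
    (by positivity) hC (by linarith) (by linarith)
  set a : ℝ := s ^ 2 with ha_def
  have ha : 0 < a := by positivity
  have h2a : (0:ℝ) < 2 * a := by linarith
  have hpa : (0:ℝ) < p * a := by positivity
  set c : ℝ := Real.sqrt (β * s) with hc_def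
  have hc : 0 < c := Real.sqrt_pos.2 (by positivity)
  have hc2 : c ^ 2 = β * s := Real.sq_sqrt (by positivity)
  set u : ℝ → ℝ := fun x => c * Real.exp (-a * x ^ 2) with hu_def
  set u' : ℝ → ℝ := fun x => c * (Real.exp (-a * x ^ 2) * (-a * (2 * x))) with hu'_def
  have hderiv : ∀ x : ℝ, HasDerivAt u (u' x) x := by
    intro x
    have h1 : HasDerivAt (fun y : ℝ => -a * y ^ 2) (-a * (2 * x)) x := by
      simpa using (hasDerivAt_pow 2 x).const_mul (-a)
    exact (h1.exp).const_mul c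
  have hu_cont : Continuous u :=
    continuous_const.mul (Real.continuous_exp.comp (continuous_const.mul (continuous_pow 2)))
  have hu'_cont : Continuous u' :=
    continuous_const.mul
      ((Real.continuous_exp.comp (continuous_const.mul (continuous_pow 2))).mul
        (continuous_const.mul (continuous_const.mul continuous_id)))
  have hsπ2 : (0:ℝ) < Real.sqrt (π / 2) := Real.sqrt_pos.2 (by positivity)
  -- mass
  have hmass_fun : (fun x : ℝ => u x ^ 2) = fun x => c ^ 2 * Real.exp (-(2 * a) * x ^ 2) := by
    funext x
    rw [hu_def, mul_pow, pow_two (Real.exp _), ← Real.exp_add]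
    congr 2
    ring
  have hint_u2 : Integrable (fun x : ℝ => u x ^ 2) volume := by
    rw [hmass_fun]
    exact (integrable_exp_neg_mul_sq h2a).const_mul _
  have hsqrt2a : Real.sqrt (π / (2 * a)) = Real.sqrt (π / 2) / s := by
    rw [show π / (2 * a) = (π / 2) / s ^ 2 by rw [ha_def]; ring,
      Real.sqrt_div (by positivity) _, Real.sqrt_sq hs.le]
  have hmass : (∫ x : ℝ, u x ^ 2) = μ := by
    rw [hmass_fun, integral_const_mul, integral_gaussian, hc2, hsqrt2a, hβ_def]
    field_simp
  -- kinetic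
  have hptk : ∀ x : ℝ, u' x ^ 2 ≤ 4 * a * c ^ 2 * Real.exp (-a * x ^ 2) := by
    intro x
    simp only [hu'_def]
    have hE0 : 0 < Real.exp (-a * x ^ 2) := Real.exp_pos _
    have h2 : Real.exp (-a * x ^ 2) * Real.exp (a * x ^ 2) = 1 := by
      rw [← Real.exp_add]; simp
    have h3 : a * x ^ 2 ≤ Real.exp (a * x ^ 2) := by
      nlinarith [Real.add_one_le_exp (a * x ^ 2)]
    have h4 : Real.exp (-a * x ^ 2) * (a * x ^ 2) ≤ 1 := by
      nlinarith [mul_le_mul_of_nonneg_left h3 hE0.le]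
    have h5 : 0 ≤ a * c ^ 2 * Real.exp (-a * x ^ 2) *
        (1 - Real.exp (-a * x ^ 2) * (a * x ^ 2)) :=
      mul_nonneg (by positivity) (by linarith)
    nlinarith [h5, sq_nonneg c, hE0]
  have hint_u'2 : Integrable (fun x : ℝ => u' x ^ 2) volume := by
    refine ((integrable_exp_neg_mul_sq ha).const_mul (4 * a * c ^ 2)).mono'
      ((hu'_cont.pow 2).aestronglyMeasurable) (ae_of_all _ fun x => ?_)
    rw [Real.norm_eq_abs, abs_of_nonneg (sq_nonneg _)]
    exact hptk x
  have hsqrta : Real.sqrt (π / a) = Real.sqrt π / s := by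
    rw [show π / a = π / s ^ 2 by rw [ha_def],
      Real.sqrt_div hπ.le, Real.sqrt_sq hs.le]
  have hkin : (∫ x : ℝ, u' x ^ 2) ≤ 4 * a * c ^ 2 * Real.sqrt (π / a) := by
    calc (∫ x : ℝ, u' x ^ 2) ≤ ∫ x : ℝ, 4 * a * c ^ 2 * Real.exp (-a * x ^ 2) :=
          integral_mono hint_u'2 ((integrable_exp_neg_mul_sq ha).const_mul _) hptk
      _ = 4 * a * c ^ 2 * Real.sqrt (π / a) := by rw [integral_const_mul, integral_gaussian]
  have hkin2 : 4 * a * c ^ 2 * Real.sqrt (π / a) = 2 * (2 * Real.sqrt π * β * s ^ (2:ℝ)) := by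
    rw [hsqrta, hc2, ha_def, show s ^ ((2:ℝ)) = s ^ (2:ℕ) by
      rw [show ((2:ℝ)) = ((2:ℕ):ℝ) by norm_num, Real.rpow_natCast]]
    field_simp
    ring
  -- potential
  have hpot_fun : (fun x : ℝ => |u x| ^ p) = fun x => c ^ p * Real.exp (-(p * a) * x ^ 2) := by
    funext x
    have hE0 : 0 < Real.exp (-a * x ^ 2) := Real.exp_pos _
    rw [hu_def]
    rw [abs_of_pos (by positivity : (0:ℝ) < c * Real.exp (-a * x ^ 2))]
    rw [Real.mul_rpow hc.le hE0.le, ← Real.exp_mul]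
    congr 2
    ring
  have hpot : (∫ x : ℝ, |u x| ^ p) = c ^ p * Real.sqrt (π / (p * a)) := by
    rw [hpot_fun, integral_const_mul, integral_gaussian]
  have hsqrtpa : Real.sqrt (π / (p * a)) = Real.sqrt (π / p) / s := by
    rw [show π / (p * a) = (π / p) / s ^ 2 by rw [ha_def]; ring,
      Real.sqrt_div (by positivity) _, Real.sqrt_sq hs.le]
  have hcp : c ^ p = β ^ (p / 2) * s ^ (p / 2) := by
    have e1 : c ^ p = (c ^ (2:ℕ)) ^ (p / 2) := by
      rw [← Real.rpow_natCast c 2, ← Real.rpow_mul hc.le]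
      congr 1
      push_cast
      ring
    rw [e1, hc2, Real.mul_rpow hβ.le hs.le]
  have hpot2 : (1 / p) * (∫ x : ℝ, |u x| ^ p) = C * s ^ (p / 2 - 1) := by
    rw [hpot, hsqrtpa, hcp, hC_def]
    rw [show s ^ (p / 2 - 1) = s ^ (p / 2) / s ^ (1:ℝ) by rw [← Real.rpow_sub hs],
      Real.rpow_one]
    field_simp
  -- FTC
  have hftc : ∀ x : ℝ, u x = u 0 + ∫ t in (0:ℝ)..x, u' t := by
    intro x
    have h1 : (∫ t in (0:ℝ)..x, u' t) = u x - u 0 :=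
      intervalIntegral.integral_eq_sub_of_hasDerivAt
        (fun t _ => hderiv t) ((hu'_cont).intervalIntegrable 0 x)
    rw [h1]; ring
  refine ⟨u, u', ⟨?_, ?_, hftc⟩, hmass, ?_⟩
  · exact (memLp_two_iff_integrable_sq hu_cont.aestronglyMeasurable).2 hint_u2
  · exact (memLp_two_iff_integrable_sq hu'_cont.aestronglyMeasurable).2 hint_u'2
  · have hE : Energy p u u' ≤ 2 * Real.sqrt π * β * s ^ (2:ℝ) - C * s ^ (p / 2 - 1) := by
      rw [Energy]
      have h1 : (1/2) * (∫ x : ℝ, u' x ^ 2) ≤ 2 * Real.sqrt π * β * s ^ (2:ℝ) := by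
        have := hkin
        rw [hkin2] at this
        linarith
      have h2 : (1/p) * (∫ x : ℝ, |u x| ^ p) = C * s ^ (p / 2 - 1) := hpot2
      linarith
    linarith


theorem levelE_finite_neg (p : ℝ) (hp2 : 2 < p) (hp6 : p < 6) (μ : ℝ) (hμ : 0 < μ) :
    BddBelow {e : ℝ | ∃ u u' : ℝ → ℝ, InH1 u u' ∧ (∫ x : ℝ, (u x) ^ 2) = μ ∧
      e = Energy p u u'} ∧
    levelE p μ < 0 := by
  obtain ⟨L, hL⟩ := energy_lower p μ hp2 hp6 hμ
  have hbdd : BddBelow {e : ℝ | ∃ u u' : ℝ → ℝ, InH1 u u' ∧ (∫ x : ℝ, (u x) ^ 2) = μ ∧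
      e = Energy p u u'} := by
    refine ⟨L, fun e he => ?_⟩
    obtain ⟨u, u', h1, h2, h3⟩ := he
    rw [h3]
    exact hL u u' h1 h2
  refine ⟨hbdd, ?_⟩
  obtain ⟨u, u', h1, h2, h3⟩ := gaussian_neg p μ hp2 hp6 hμ
  have hmem : Energy p u u' ∈ {e : ℝ | ∃ u u' : ℝ → ℝ, InH1 u u' ∧
      (∫ x : ℝ, (u x) ^ 2) = μ ∧ e = Energy p u u'} := ⟨u, u', h1, h2, rfl⟩
  have hle := csInf_le hbdd hmem
  rw [levelE]
  exact lt_of_le_of_lt hle h3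
end

section
/- Fix real exponents p ∈ (2,6) and q ∈ (2,4). Then for every ε > 0 there exists μ₀ > 0 such that for every μ ∈ (0,μ₀) and every ground state η ∈ H¹_μ(ℝ) of F_{p,q} at mass μ (i.e. any minimizer of F_{p,q}(·,ℝ) over H¹_μ(ℝ)), one has ∫_ℝ |η'|² dx ≤ ε·μ and |η(0)|² ≤ ε·μ. In particular |η(0)|² = o(μ) as μ → 0. -/
open MeasureTheory Real Filter

lemma memL2_intervalIntegrable {f : ℝ → ℝ} (hf : MemLp f 2 (volume : Measure ℝ)) (a b : ℝ) :
    IntervalIntegrable f volume a b := by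
  rw [intervalIntegrable_iff]
  have h1 : MemLp f 2 (volume.restrict (Set.uIoc a b)) := hf.restrict _
  haveI : IsFiniteMeasure (volume.restrict (Set.uIoc a b)) := by
    constructor
    rw [Measure.restrict_apply_univ]
    exact measure_Ioc_lt_top
  exact memLp_one_iff_integrable.mp (h1.mono_exponent (by norm_num))

lemma InH1.sub_eq {u u' : ℝ → ℝ} (h : InH1 u u') (x y : ℝ) :
    u x - u y = ∫ t in y..x, u' t := by
  rw [h.2.2 x, h.2.2 y]
  have := intervalIntegral.integral_interval_sub_left
    (memL2_intervalIntegrable h.2.1 0 x) (memL2_intervalIntegrable h.2.1 0 y)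
  linarith [this]

lemma InH1.integrable_sq {u u' : ℝ → ℝ} (h : InH1 u u') :
    Integrable (fun x => (u x) ^ 2) volume := h.1.integrable_sq

lemma InH1.integrable_sq' {u u' : ℝ → ℝ} (h : InH1 u u') :
    Integrable (fun x => (u' x) ^ 2) volume := h.2.1.integrable_sq

lemma good_point {u u' : ℝ → ℝ} (h : InH1 u u') (hm : 0 < ∫ x : ℝ, (u x) ^ 2)
    (x L : ℝ) (hL : 0 < L) :
    ∃ y ∈ Set.Icc (x - 2*L) x, (u y)^2 ≤ (∫ x : ℝ, (u x)^2) / L := by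
  by_contra hcon
  push_neg at hcon
  set m := ∫ x : ℝ, (u x)^2 with hm'
  have hint : IntegrableOn (fun t => (u t)^2) (Set.Icc (x - 2*L) x) volume :=
    (h.integrable_sq).integrableOn
  have h1 : (m / L) * (volume (Set.Icc (x-2*L) x)).toReal ≤ ∫ t in Set.Icc (x-2*L) x, (u t)^2 :=
    setIntegral_ge_of_const_le_real measurableSet_Icc
      (by rw [Real.volume_Icc]; exact ENNReal.ofReal_ne_top)
      (fun y hy => (hcon y hy).le) hint
  have h2 : ∫ t in Set.Icc (x-2*L) x, (u t)^2 ≤ m :=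
    setIntegral_le_integral h.integrable_sq (Filter.Eventually.of_forall fun t => sq_nonneg _)
  rw [Real.volume_Icc, ENNReal.toReal_ofReal (by linarith)] at h1
  have h3 : m / L * (x - (x - 2*L)) = 2*m := by field_simp; ring
  rw [h3] at h1
  linarith

lemma sup_bound_general {u u' : ℝ → ℝ} (h : InH1 u u') (hm : 0 < ∫ x : ℝ, (u x) ^ 2)
    {L δ : ℝ} (hL : 0 < L) (hδ : 0 < δ) (x : ℝ) :
    (u x)^2 ≤ (Real.sqrt ((∫ x : ℝ, (u x)^2) / L) + (δ * L + (∫ x : ℝ, (u' x)^2) / (2*δ)))^2 := by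
  set m := ∫ x : ℝ, (u x)^2 with hmdef
  set T := ∫ x : ℝ, (u' x)^2 with hTdef
  obtain ⟨y, hy, hyb⟩ := good_point h hm x L hL
  have hyx : y ≤ x := hy.2
  have hTnn : (0:ℝ) ≤ T := integral_nonneg fun t => sq_nonneg _
  have h1 : |u y| ≤ Real.sqrt (m / L) := by
    rw [← Real.sqrt_sq_eq_abs]
    exact Real.sqrt_le_sqrt hyb
  have h2 : |∫ t in y..x, u' t| ≤ δ * L + T / (2*δ) := by
    have ha : |∫ t in y..x, u' t| ≤ ∫ t in y..x, |u' t| :=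
      intervalIntegral.abs_integral_le_integral_abs hyx
    have hb : ∫ t in y..x, |u' t| ≤ ∫ t in y..x, (δ/2 + (u' t)^2 * (1/(2*δ))) := by
      apply intervalIntegral.integral_mono_on hyx
      · exact (memL2_intervalIntegrable h.2.1 y x).abs
      · exact intervalIntegrable_const.add ((h.integrable_sq'.intervalIntegrable).mul_const _)
      · intro t _
        have key : 2*δ*|u' t| ≤ δ^2 + (u' t)^2 := by
          nlinarith [sq_nonneg (|u' t| - δ), sq_abs (u' t)]
        have h2δ : (0:ℝ) < 2*δ := by linarith
        calc |u' t| = (2*δ*|u' t|)/(2*δ) := by field_simp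
          _ ≤ (δ^2 + (u' t)^2)/(2*δ) := by gcongr
          _ = δ/2 + (u' t)^2 * (1/(2*δ)) := by field_simp
    have hc : ∫ t in y..x, (δ/2 + (u' t)^2 * (1/(2*δ)))
        = (x - y)*(δ/2) + (∫ t in y..x, (u' t)^2) * (1/(2*δ)) := by
      rw [intervalIntegral.integral_add intervalIntegrable_const
        ((h.integrable_sq'.intervalIntegrable).mul_const _),
        intervalIntegral.integral_const, intervalIntegral.integral_mul_const]
      simp [smul_eq_mul]
    have hd : ∫ t in y..x, (u' t)^2 ≤ T := by
      rw [intervalIntegral.integral_of_le hyx]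
      exact setIntegral_le_integral h.integrable_sq'
        (Filter.Eventually.of_forall fun t => sq_nonneg _)
    have he : (0:ℝ) ≤ ∫ t in y..x, (u' t)^2 := by
      rw [intervalIntegral.integral_of_le hyx]
      exact integral_nonneg fun t => sq_nonneg _
    have hxy : x - y ≤ 2*L := by have := hy.1; linarith
    calc |∫ t in y..x, u' t| ≤ (x - y)*(δ/2) + (∫ t in y..x, (u' t)^2) * (1/(2*δ)) := by
          rw [← hc]; exact ha.trans hb
      _ ≤ (2*L)*(δ/2) + T * (1/(2*δ)) := by
          have h1' : (x - y)*(δ/2) ≤ (2*L)*(δ/2) := by nlinarith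
          have h2' : (∫ t in y..x, (u' t)^2) * (1/(2*δ)) ≤ T * (1/(2*δ)) := by
            apply mul_le_mul_of_nonneg_right hd; positivity
          linarith
      _ = δ * L + T / (2*δ) := by field_simp
  have hux : |u x| ≤ Real.sqrt (m / L) + (δ * L + T / (2*δ)) := by
    have := h.sub_eq x y
    calc |u x| = |u y + ∫ t in y..x, u' t| := by rw [show u x = u y + ∫ t in y..x, u' t by linarith [this]]
      _ ≤ |u y| + |∫ t in y..x, u' t| := abs_add_le _ _
      _ ≤ Real.sqrt (m / L) + (δ * L + T / (2*δ)) := add_le_add h1 h2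
  calc (u x)^2 = |u x|^2 := (sq_abs _).symm
    _ ≤ (Real.sqrt (m / L) + (δ * L + T / (2*δ)))^2 := by
        apply pow_le_pow_left₀ (abs_nonneg _) hux

lemma sup_bound {u u' : ℝ → ℝ} (h : InH1 u u') (hm : 0 < ∫ x : ℝ, (u x) ^ 2)
    (hT : 0 < ∫ x : ℝ, (u' x)^2) (x : ℝ) :
    (u x)^2 ≤ 9 * Real.sqrt (∫ x : ℝ, (u x)^2) * Real.sqrt (∫ x : ℝ, (u' x)^2) := by
  set m := ∫ x : ℝ, (u x)^2 with hmdef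
  set T := ∫ x : ℝ, (u' x)^2 with hTdef
  set a := m ^ ((4:ℝ)⁻¹) with hadef
  set b := T ^ ((4:ℝ)⁻¹) with hbdef
  have hapos : 0 < a := Real.rpow_pos_of_pos hm _
  have hbpos : 0 < b := Real.rpow_pos_of_pos hT _
  have ham : a^4 = m := by
    rw [hadef, ← Real.rpow_natCast (m ^ _) 4, ← Real.rpow_mul hm.le]; norm_num
  have hbm : b^4 = T := by
    rw [hbdef, ← Real.rpow_natCast (T ^ _) 4, ← Real.rpow_mul hT.le]; norm_num
  have hL : (0:ℝ) < a^2/b^2 := by positivity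
  have hδ : (0:ℝ) < b^3/a := by positivity
  have H := sup_bound_general h hm hL hδ x
  have e1 : m / (a^2/b^2) = (a*b)^2 := by
    rw [← ham]; field_simp
  have e2 : Real.sqrt ((a*b)^2) = a*b := Real.sqrt_sq (by positivity)
  have e3 : (b^3/a) * (a^2/b^2) = a*b := by field_simp
  have e4 : T / (2*(b^3/a)) = a*b/2 := by
    rw [← hbm]; field_simp
  have e5 : Real.sqrt m = a^2 := by
    rw [← ham, show (a:ℝ)^4 = (a^2)^2 by ring, Real.sqrt_sq (by positivity)]
  have e6 : Real.sqrt T = b^2 := by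
    rw [← hbm, show (b:ℝ)^4 = (b^2)^2 by ring, Real.sqrt_sq (by positivity)]
  rw [e1, e2, e3, e4] at H
  rw [e5, e6]
  calc (u x)^2 ≤ (a*b + (a*b + a*b/2))^2 := H
    _ ≤ 9 * a^2 * b^2 := by nlinarith [mul_pos hapos hbpos]

lemma gaussian_test (p q μ c : ℝ) (hp : 0 < p) (hq : 0 < q) (hμ : 0 < μ) (hc : 0 < c) :
    ∃ u u' : ℝ → ℝ, InH1 u u' ∧ (∫ x : ℝ, (u x)^2) = μ ∧ Fpq p q u u' ≤ 2 * c * μ := by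
  set I := Real.sqrt (π / (2*c)) with hIdef
  have hIpos : 0 < I := Real.sqrt_pos.mpr (by positivity)
  set a := Real.sqrt (μ / I) with hadef
  have hapos : 0 < a := Real.sqrt_pos.mpr (by positivity)
  have ha2 : a^2 = μ / I := Real.sq_sqrt (by positivity)
  set u : ℝ → ℝ := fun x => a * Real.exp (-c * x^2) with hu
  set u' : ℝ → ℝ := fun x => a * (Real.exp (-c * x^2) * (-c * (2*x))) with hu'
  have hderiv : ∀ x : ℝ, HasDerivAt u (u' x) x := by
    intro x
    have h1 : HasDerivAt (fun x : ℝ => -c * x^2) (-c * (2*x)) x := by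
      simpa using (hasDerivAt_pow 2 x).const_mul (-c)
    exact (h1.exp).const_mul a
  have hbase : Continuous (fun x : ℝ => -c * x^2) := continuous_const.mul (continuous_pow 2)
  have hcont : Continuous u := continuous_const.mul (Real.continuous_exp.comp hbase)
  have hcont' : Continuous u' := continuous_const.mul
    ((Real.continuous_exp.comp hbase).mul (continuous_const.mul (continuous_const.mul continuous_id)))
  have husq : (fun x => (u x)^2) = (fun x => a^2 * Real.exp (-(2*c) * x^2)) := by
    funext x
    rw [hu]
    simp only
    rw [mul_pow, sq (Real.exp _), ← Real.exp_add]
    ring_nf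
  have hu'sq : (fun x => (u' x)^2) = (fun x => (4*a^2*c^2) * (x^2 * Real.exp (-(2*c) * x^2))) := by
    funext x
    have e : (Real.exp (-c*x^2))^2 = Real.exp (-(2*c)*x^2) := by
      rw [sq, ← Real.exp_add]; ring_nf
    calc (u' x)^2 = a^2 * ((Real.exp (-c*x^2))^2 * (c*(2*x))^2) := by rw [hu']; ring
      _ = (4*a^2*c^2) * (x^2 * Real.exp (-(2*c) * x^2)) := by rw [e]; ring
  have hintu2 : Integrable (fun x => (u x)^2) volume := by
    rw [husq]
    exact (integrable_exp_neg_mul_sq (show (0:ℝ) < 2*c by positivity)).const_mul _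
  have hintu'2 : Integrable (fun x => (u' x)^2) volume := by
    rw [hu'sq]
    have h := integrable_rpow_mul_exp_neg_mul_sq (s := ((2:ℕ):ℝ))
      (show (0:ℝ) < 2*c by positivity) (by norm_num)
    have e : (fun x : ℝ => x ^ ((2:ℕ):ℝ) * Real.exp (-(2*c)*x^2))
        = (fun x : ℝ => x^2 * Real.exp (-(2*c)*x^2)) := by
      funext x; rw [Real.rpow_natCast]
    rw [e] at h
    exact h.const_mul _
  have hIn : InH1 u u' := by
    refine ⟨(memLp_two_iff_integrable_sq hcont.aestronglyMeasurable).mpr hintu2,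
      (memLp_two_iff_integrable_sq hcont'.aestronglyMeasurable).mpr hintu'2, fun x => ?_⟩
    have := intervalIntegral.integral_eq_sub_of_hasDerivAt (f := u) (f' := u')
      (fun t _ => hderiv t) (hcont'.intervalIntegrable 0 x)
    linarith [this]
  have hmass : (∫ x : ℝ, (u x)^2) = μ := by
    rw [husq, MeasureTheory.integral_const_mul, integral_gaussian, ← hIdef, ha2]
    field_simp
  have hmaj : ∀ x, (u' x)^2 ≤ (2*a^2*c) * Real.exp (-c * x^2) := by
    intro x
    have hs0 : (0:ℝ) ≤ c * x^2 := by positivity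
    set s := c * x^2 with hs
    have ee : Real.exp (s/2) * Real.exp (s/2) = Real.exp s := by
      rw [← Real.exp_add]; ring_nf
    have key : 2*s ≤ Real.exp s := by
      nlinarith [Real.add_one_le_exp (s/2), Real.exp_pos (s/2), sq_nonneg (s/2 - 1)]
    have e0 : (u' x)^2 = 4*a^2*c*(s * Real.exp (-(2*s))) := by
      rw [congrFun hu'sq x, show -(2*c)*x^2 = -(2*s) by rw [hs]; ring, hs]
      ring
    have e2 : Real.exp (-c*x^2) = Real.exp (-s) := by rw [hs]; ring_nf
    have e3 : Real.exp s * Real.exp (-(2*s)) = Real.exp (-s) := by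
      rw [← Real.exp_add]; ring_nf
    rw [e0, e2]
    have H1 : 2*s*Real.exp (-(2*s)) ≤ Real.exp (-s) := by
      calc 2*s*Real.exp (-(2*s)) ≤ Real.exp s * Real.exp (-(2*s)) :=
        mul_le_mul_of_nonneg_right key (Real.exp_pos _).le
        _ = Real.exp (-s) := e3
    have haa : (0:ℝ) < a^2*c := by positivity
    nlinarith [H1, haa]
  have hTb : (∫ x : ℝ, (u' x)^2) ≤ 2*Real.sqrt 2*c*μ := by
    have hint_maj : Integrable (fun x => (2*a^2*c) * Real.exp (-c*x^2)) volume :=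
      (integrable_exp_neg_mul_sq hc).const_mul _
    calc (∫ x : ℝ, (u' x)^2) ≤ ∫ x : ℝ, (2*a^2*c)*Real.exp (-c*x^2) :=
          integral_mono_of_nonneg (Filter.Eventually.of_forall fun x => sq_nonneg _)
            hint_maj (Filter.Eventually.of_forall hmaj)
      _ = (2*a^2*c) * Real.sqrt (π/c) := by rw [MeasureTheory.integral_const_mul, integral_gaussian]
      _ = 2*Real.sqrt 2*c*μ := by
          rw [show π/c = 2*(π/(2*c)) by field_simp, Real.sqrt_mul (by norm_num : (0:ℝ) ≤ 2), ← hIdef, ha2]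
          field_simp
  have hP : 0 ≤ ∫ x : ℝ, |u x| ^ p := integral_nonneg fun x => Real.rpow_nonneg (abs_nonneg _) _
  have hQ : 0 ≤ |u 0| ^ q := Real.rpow_nonneg (abs_nonneg _) _
  have hsqrt2 : Real.sqrt 2 ≤ 2 := by
    nlinarith [Real.sq_sqrt (show (0:ℝ) ≤ 2 by norm_num), Real.sqrt_nonneg 2]
  refine ⟨u, u', hIn, hmass, ?_⟩
  unfold Fpq Energy
  have h1 : (1/p) * (∫ x : ℝ, |u x| ^ p) ≥ 0 := by positivity
  have h2 : (1/q) * |u 0| ^ q ≥ 0 := by positivity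
  have h3 : (1/2) * (∫ x : ℝ, (u' x)^2) ≤ Real.sqrt 2 * c * μ := by linarith
  have h4 : Real.sqrt 2 * c * μ ≤ 2 * c * μ := by
    nlinarith [mul_nonneg (mul_nonneg (sub_nonneg.mpr hsqrt2) hc.le) hμ.le]
  linarith

lemma key_est {μ T ε' : ℝ} (hμ : 0 < μ) (hT : 0 < T) (hε' : 0 < ε') (hcon : ε' * μ ≤ T)
    (α : ℝ) (hα1 : α ≤ 1) :
    μ ^ α * T ^ α ≤ ε' ^ (α-1) * μ ^ (2*α - 1) * T := by
  have h1 : T ^ (α-1) * T = T ^ α := by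
    rw [← Real.rpow_add_one hT.ne' (α-1)]
    norm_num
  have h2 : T ^ (α-1) ≤ (ε'*μ) ^ (α-1) :=
    Real.rpow_le_rpow_of_nonpos (by positivity) hcon (by linarith)
  have h3 : μ ^ α * T ^ α = (μ ^ α * T ^ (α-1)) * T := by rw [← h1]; ring
  rw [h3]
  have h4 : μ ^ α * T ^ (α-1) ≤ μ ^ α * (ε'*μ) ^ (α-1) :=
    mul_le_mul_of_nonneg_left h2 (Real.rpow_nonneg hμ.le _)
  have h5 : μ ^ α * (ε'*μ) ^ (α-1) = ε' ^ (α-1) * μ ^ (2*α-1) := by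
    rw [Real.mul_rpow hε'.le hμ.le,
      show μ^α * (ε'^(α-1) * μ^(α-1)) = ε'^(α-1) * (μ^α * μ^(α-1)) by ring,
      ← Real.rpow_add hμ, show α + (α-1) = 2*α-1 by ring]
  calc (μ^α * T^(α-1))*T ≤ (μ^α * (ε'*μ)^(α-1))*T := mul_le_mul_of_nonneg_right h4 hT.le
    _ = ε'^(α-1) * μ^(2*α-1) * T := by rw [h5]

lemma abs_rpow_le {v B r : ℝ} (hB : 0 < B) (hv : v^2 ≤ B) (hr : 0 ≤ r) :
    |v| ^ r ≤ B ^ (r/2) := by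
  have h1 : |v| ≤ Real.sqrt B := by
    rw [← Real.sqrt_sq_eq_abs]; exact Real.sqrt_le_sqrt hv
  calc |v| ^ r ≤ (Real.sqrt B) ^ r := Real.rpow_le_rpow (abs_nonneg _) h1 hr
    _ = B ^ (r/2) := by
      rw [Real.sqrt_eq_rpow, ← Real.rpow_mul hB.le, show 1/2*r = r/2 by ring]

lemma rpow_split {v B p : ℝ} (hB : 0 < B) (hv : v^2 ≤ B) (hp : 2 ≤ p) :
    |v| ^ p ≤ B ^ ((p-2)/2) * v^2 := by
  rcases eq_or_ne v 0 with h | h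
  · rw [h]
    simp [Real.zero_rpow (show p ≠ 0 by linarith)]
  · have hva : 0 < |v| := abs_pos.mpr h
    have e : |v| ^ p = |v| ^ (p-2) * |v| ^ ((2:ℕ):ℝ) := by
      rw [← Real.rpow_add hva]; norm_num
    rw [e, Real.rpow_natCast, sq_abs]
    exact mul_le_mul_of_nonneg_right (abs_rpow_le hB hv (by linarith)) (sq_nonneg v)

theorem ground_state_smallness_as_mass_to_zero (p q : ℝ) (hp : 2 < p ∧ p < 6)
    (hq : 2 < q ∧ q < 4) :
    ∀ ε : ℝ, 0 < ε → ∃ μ₀ : ℝ, 0 < μ₀ ∧ ∀ μ : ℝ, 0 < μ → μ < μ₀ →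
      ∀ η η' : ℝ → ℝ, InH1 η η' → (∫ x : ℝ, (η x) ^ 2) = μ →
        Fpq p q η η' = levelF p q μ →
        (∫ x : ℝ, (η' x) ^ 2) ≤ ε * μ ∧ |η 0| ^ 2 ≤ ε * μ := by
  obtain ⟨hp2, hp6⟩ := hp
  obtain ⟨hq2, hq4⟩ := hq
  have hppos : 0 < p := by linarith
  have hqpos : 0 < q := by linarith
  intro ε hε
  set ε' := min ε ((ε/9)^2) with hε'def
  have hε'pos : 0 < ε' := lt_min hε (by positivity)
  have hε'le : ε' ≤ ε := min_le_left _ _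
  set K₁ := (1/p) * (9:ℝ) ^ ((p-2)/2) * ε' ^ ((p-2)/4 - 1) with hK₁def
  set K₂ := (1/q) * (9:ℝ) ^ (q/2) * ε' ^ (q/4 - 1) with hK₂def
  have hK₁pos : 0 < K₁ :=
    mul_pos (mul_pos (by positivity) (Real.rpow_pos_of_pos (by norm_num) _))
      (Real.rpow_pos_of_pos hε'pos _)
  have hK₂pos : 0 < K₂ :=
    mul_pos (mul_pos (by positivity) (Real.rpow_pos_of_pos (by norm_num) _))
      (Real.rpow_pos_of_pos hε'pos _)
  set γ₁ := (p-2)/2 with hγ₁def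
  set γ₂ := (q-2)/2 with hγ₂def
  have hγ₁pos : 0 < γ₁ := by rw [hγ₁def]; linarith
  have hγ₂pos : 0 < γ₂ := by rw [hγ₂def]; linarith
  set μ₁ := ((8*K₁)⁻¹) ^ (γ₁⁻¹) with hμ₁def
  set μ₂ := ((8*K₂)⁻¹) ^ (γ₂⁻¹) with hμ₂def
  have hμ₁pos : 0 < μ₁ := Real.rpow_pos_of_pos (by positivity) _
  have hμ₂pos : 0 < μ₂ := Real.rpow_pos_of_pos (by positivity) _
  refine ⟨min μ₁ μ₂, lt_min hμ₁pos hμ₂pos, ?_⟩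
  intro μ hμ hμlt η η' hη hmass hmin
  set T := ∫ x : ℝ, (η' x)^2 with hTdef
  have hTnn : 0 ≤ T := integral_nonneg fun x => sq_nonneg _
  have hmpos : 0 < ∫ x : ℝ, (η x)^2 := by rw [hmass]; exact hμ
  have hTpos : 0 < T := by
    rcases hTnn.lt_or_eq with h | h
    · exact h
    · exfalso
      have hi : Integrable (fun x => (η' x)^2) volume := hη.integrable_sq'
      have h0 : (fun x => (η' x)^2) =ᵐ[volume] 0 :=
        (integral_eq_zero_iff_of_nonneg (fun x => sq_nonneg _) hi).mp h.symm
      have h0' : η' =ᵐ[volume] (fun _ => (0:ℝ)) := by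
        filter_upwards [h0] with x hx
        exact pow_eq_zero_iff (n := 2) (by norm_num) |>.mp hx
      have hconst : ∀ x : ℝ, η x = η 0 := by
        intro x
        rw [hη.2.2 x]
        have e : (∫ t in (0:ℝ)..x, η' t) = ∫ t in (0:ℝ)..x, (0:ℝ) :=
          intervalIntegral.integral_congr_ae (by filter_upwards [h0'] with t ht _; exact ht)
        rw [e]; simp
      have hz : (∫ x : ℝ, (η x)^2) = 0 := by
        have e : (fun x : ℝ => (η x)^2) = fun _ : ℝ => (η 0)^2 := funext fun x => by rw [hconst x]
        rw [e]
        simp [Measure.real]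
      linarith [hmpos]
  have hB : ∀ x, (η x)^2 ≤ 9 * Real.sqrt μ * Real.sqrt T := by
    intro x
    have h := sup_bound hη hmpos hTpos x
    rwa [hmass] at h
  set B := 9 * Real.sqrt μ * Real.sqrt T with hBdef
  have hBpos : 0 < B := by
    have h1 := Real.sqrt_pos.mpr hμ
    have h2 := Real.sqrt_pos.mpr hTpos
    positivity
  have hF : Fpq p q η η' ≤ 0 := by
    by_cases hbdd : BddBelow {e : ℝ | ∃ u u' : ℝ → ℝ, InH1 u u' ∧ (∫ x : ℝ, (u x) ^ 2) = μ ∧ e = Fpq p q u u'}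
    · by_contra hFpos
      push_neg at hFpos
      obtain ⟨v, v', hv, hvmass, hvF⟩ :=
        gaussian_test p q μ (Fpq p q η η' / (4*μ)) hppos hqpos hμ (by positivity)
      have hmem : Fpq p q v v' ∈ {e : ℝ | ∃ u u' : ℝ → ℝ, InH1 u u' ∧ (∫ x : ℝ, (u x) ^ 2) = μ ∧ e = Fpq p q u u'} :=
        ⟨v, v', hv, hvmass, rfl⟩
      have hle : levelF p q μ ≤ Fpq p q v v' := csInf_le hbdd hmem
      rw [← hmin] at hle
      have e : 2 * (Fpq p q η η' / (4*μ)) * μ = Fpq p q η η' / 2 := by field_simp; ring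
      rw [e] at hvF
      linarith
    · rw [hmin]
      unfold levelF
      rw [Real.sInf_of_not_bddBelow hbdd]
  have hPb : (∫ x : ℝ, |η x| ^ p) ≤ B ^ ((p-2)/2) * μ := by
    have hmaj : ∀ x, |η x| ^ p ≤ B ^ ((p-2)/2) * (η x)^2 :=
      fun x => rpow_split hBpos (hB x) (by linarith)
    calc (∫ x : ℝ, |η x| ^ p) ≤ ∫ x : ℝ, B ^ ((p-2)/2) * (η x)^2 :=
        integral_mono_of_nonneg
          (Filter.Eventually.of_forall fun x => Real.rpow_nonneg (abs_nonneg _) _)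
          (hη.integrable_sq.const_mul _)
          (Filter.Eventually.of_forall hmaj)
      _ = B ^ ((p-2)/2) * μ := by rw [MeasureTheory.integral_const_mul, hmass]
  have hQb : |η 0| ^ q ≤ B ^ (q/2) := abs_rpow_le hBpos (hB 0) (by linarith)
  have hPnn : 0 ≤ ∫ x : ℝ, |η x| ^ p := integral_nonneg fun x => Real.rpow_nonneg (abs_nonneg _) _
  have hQnn : (0:ℝ) ≤ |η 0| ^ q := Real.rpow_nonneg (abs_nonneg _) _
  have hexp : (1/2)*T ≤ (1/p)*(B ^ ((p-2)/2) * μ) + (1/q)*(B ^ (q/2)) := by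
    unfold Fpq Energy at hF
    rw [← hTdef] at hF
    have e1 : (1/p)*(∫ x : ℝ, |η x| ^ p) ≤ (1/p)*(B ^ ((p-2)/2) * μ) :=
      mul_le_mul_of_nonneg_left hPb (by positivity)
    have e2 : (1/q)*(|η 0| ^ q) ≤ (1/q)*(B ^ (q/2)) :=
      mul_le_mul_of_nonneg_left hQb (by positivity)
    linarith
  have hBpow : ∀ r : ℝ, B ^ r = 9 ^ r * (μ ^ (r/2) * T ^ (r/2)) := by
    intro r
    rw [hBdef, Real.mul_rpow (by positivity) (Real.sqrt_nonneg _),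
      Real.mul_rpow (by norm_num) (Real.sqrt_nonneg _),
      Real.sqrt_eq_rpow, Real.sqrt_eq_rpow,
      ← Real.rpow_mul hμ.le, ← Real.rpow_mul hTnn,
      show 1/2*r = r/2 by ring]
    ring
  have hkey : T ≤ ε' * μ := by
    by_contra hcon
    push_neg at hcon
    have hcon' : ε' * μ ≤ T := hcon.le
    have est1 := key_est hμ hTpos hε'pos hcon' ((p-2)/4) (by linarith)
    have est2 := key_est hμ hTpos hε'pos hcon' (q/4) (by linarith)
    have ht1 : (1/p)*(B ^ ((p-2)/2) * μ) ≤ K₁ * μ ^ γ₁ * T := by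
      rw [hBpow ((p-2)/2), show ((p-2)/2)/2 = (p-2)/4 by ring]
      have h2 : μ ^ (2*((p-2)/4) - 1) * μ = μ ^ γ₁ := by
        nth_rewrite 2 [← Real.rpow_one μ]
        rw [← Real.rpow_add hμ, hγ₁def, show 2*((p-2)/4) - 1 + 1 = (p-2)/2 by ring]
      calc (1/p)*(9 ^ ((p-2)/2) * (μ ^ ((p-2)/4) * T ^ ((p-2)/4)) * μ)
          ≤ (1/p)*(9 ^ ((p-2)/2) * (ε' ^ ((p-2)/4-1) * μ ^ (2*((p-2)/4)-1) * T) * μ) := by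
            apply mul_le_mul_of_nonneg_left _ (by positivity)
            apply mul_le_mul_of_nonneg_right _ hμ.le
            exact mul_le_mul_of_nonneg_left est1 (Real.rpow_nonneg (by norm_num) _)
        _ = K₁ * (μ ^ (2*((p-2)/4)-1) * μ) * T := by rw [hK₁def]; ring
        _ = K₁ * μ ^ γ₁ * T := by rw [h2]
    have ht2 : (1/q)*(B ^ (q/2)) ≤ K₂ * μ ^ γ₂ * T := by
      rw [hBpow (q/2), show (q/2)/2 = q/4 by ring]
      calc (1/q)*(9 ^ (q/2) * (μ ^ (q/4) * T ^ (q/4)))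
          ≤ (1/q)*(9 ^ (q/2) * (ε' ^ (q/4-1) * μ ^ (2*(q/4)-1) * T)) := by
            apply mul_le_mul_of_nonneg_left _ (by positivity)
            exact mul_le_mul_of_nonneg_left est2 (Real.rpow_nonneg (by norm_num) _)
        _ = K₂ * μ ^ (2*(q/4)-1) * T := by rw [hK₂def]; ring
        _ = K₂ * μ ^ γ₂ * T := by rw [show 2*(q/4)-1 = (q-2)/2 by ring, ← hγ₂def]
    have hs1 : K₁ * μ ^ γ₁ ≤ 1/8 := by
      have hμle : μ ≤ μ₁ := le_of_lt (lt_of_lt_of_le hμlt (min_le_left _ _))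
      have hmono : μ ^ γ₁ ≤ μ₁ ^ γ₁ := Real.rpow_le_rpow hμ.le hμle hγ₁pos.le
      have hμ₁γ : μ₁ ^ γ₁ = (8*K₁)⁻¹ := by
        rw [hμ₁def, ← Real.rpow_mul (by positivity), inv_mul_cancel₀ hγ₁pos.ne', Real.rpow_one]
      calc K₁ * μ ^ γ₁ ≤ K₁ * (8*K₁)⁻¹ := by
            rw [← hμ₁γ]; exact mul_le_mul_of_nonneg_left hmono hK₁pos.le
        _ = 1/8 := by field_simp
    have hs2 : K₂ * μ ^ γ₂ ≤ 1/8 := by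
      have hμle : μ ≤ μ₂ := le_of_lt (lt_of_lt_of_le hμlt (min_le_right _ _))
      have hmono : μ ^ γ₂ ≤ μ₂ ^ γ₂ := Real.rpow_le_rpow hμ.le hμle hγ₂pos.le
      have hμ₂γ : μ₂ ^ γ₂ = (8*K₂)⁻¹ := by
        rw [hμ₂def, ← Real.rpow_mul (by positivity), inv_mul_cancel₀ hγ₂pos.ne', Real.rpow_one]
      calc K₂ * μ ^ γ₂ ≤ K₂ * (8*K₂)⁻¹ := by
            rw [← hμ₂γ]; exact mul_le_mul_of_nonneg_left hmono hK₂pos.le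
        _ = 1/8 := by field_simp
    have hm1 : K₁ * μ ^ γ₁ * T ≤ (1/8)*T := mul_le_mul_of_nonneg_right hs1 hTnn
    have hm2 : K₂ * μ ^ γ₂ * T ≤ (1/8)*T := mul_le_mul_of_nonneg_right hs2 hTnn
    linarith
  refine ⟨hkey.trans (mul_le_mul_of_nonneg_right hε'le hμ.le), ?_⟩
  have h0 := hB 0
  have hsT : Real.sqrt T ≤ Real.sqrt (ε'*μ) := Real.sqrt_le_sqrt hkey
  have heq : Real.sqrt (ε'*μ) = Real.sqrt ε' * Real.sqrt μ := Real.sqrt_mul hε'pos.le μ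
  have h1 : Real.sqrt ε' ≤ ε/9 := by
    have h2 : ε' ≤ (ε/9)^2 := min_le_right _ _
    calc Real.sqrt ε' ≤ Real.sqrt ((ε/9)^2) := Real.sqrt_le_sqrt h2
      _ = ε/9 := Real.sqrt_sq (by positivity)
  have hμμ : Real.sqrt μ * Real.sqrt μ = μ := Real.mul_self_sqrt hμ.le
  calc |η 0|^2 = (η 0)^2 := sq_abs _
    _ ≤ 9 * Real.sqrt μ * Real.sqrt T := h0
    _ ≤ 9 * Real.sqrt μ * (Real.sqrt ε' * Real.sqrt μ) :=
        mul_le_mul_of_nonneg_left (hsT.trans_eq heq) (by positivity)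
    _ = 9 * Real.sqrt ε' * (Real.sqrt μ * Real.sqrt μ) := by ring
    _ = 9 * Real.sqrt ε' * μ := by rw [hμμ]
    _ ≤ ε * μ := by
        have h9 : 9 * Real.sqrt ε' ≤ ε := by linarith
        exact mul_le_mul_of_nonneg_right h9 hμ.le
end
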